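/- arXiv:math/0105133 — 4 statements merged into one kernel-verified Lean document; each statement's English description precedes it below -/
import Mathlib

section
/- Assume the setup below, with matrices A_1,…,A_l satisfying hypotheses (a)–(c). If g and g̃ in V both satisfy the system ∂_i g = A_i g for all 1 ≤ i ≤ l, and if g_d^0 = g̃_d^0 for every d = (d_1,…,d_{l+1}) ∈ ℕ^{l+1} satisfying d_1 = m_1 d_{l+1}, …, d_l = m_l d_{l+1}, then g = g̃. (Uniqueness half of Proposition 6.1: solutions of the system are uniquely determined by the degree-zero terms g_d^0 for those d.) -/
/-!
STATEMENT 2 (uniqueness half of Proposition 6.1 of the paper).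

Setup.  `ℕ →₀ R` is the `R`-module of finitely supported sequences (the model of
`R^∞_0`).  A polynomial in `t_1, …, t_l` with coefficients in `ℕ →₀ R` is encoded as
`p : (Fin l →₀ ℕ) →₀ (ℕ →₀ R)` (the coefficient of the monomial `t^n` being `p n`).
An element of `V = R^∞_0[t_1,…,t_l][[e^{t_1},…,e^{t_{l+1}}]]` is a family
`g : (Fin (l+1) → ℕ) → ((Fin l →₀ ℕ) →₀ (ℕ →₀ R))`, the coefficient of
`e^{t·d}` being the polynomial `g d`.  The indices `1,…,l` are `Fin.castSucc i` for
`i : Fin l`, and the index `l+1` is `Fin.last l`.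
-/

/-- Polynomials in `t_1,…,t_l` with coefficients in `ℕ →₀ R`. -/
abbrev TodaPoly (l : ℕ) (R : Type*) [CommRing R] : Type _ :=
  (Fin l →₀ ℕ) →₀ (ℕ →₀ R)

/-- The space `V = R^∞_0[t_1,…,t_l][[e^{t_1},…,e^{t_{l+1}}]]`. -/
abbrev TodaV (l : ℕ) (R : Type*) [CommRing R] : Type _ :=
  (Fin (l + 1) → ℕ) → TodaPoly l R

/-- Formal partial derivative `∂/∂t_i` of a polynomial:
the monomial `c · t^n` is sent to `(n i) • c · t^(n - e_i)`. -/
noncomputable def todaPolyPderiv {l : ℕ} {R : Type*} [CommRing R] (i : Fin l)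
    (p : TodaPoly l R) : TodaPoly l R :=
  p.sum fun n c => Finsupp.single (n - Finsupp.single i 1) ((n i) • c)

/-- The twisted derivative `∂_i` on `V`:
`(∂_i g)_d = ∂g_d/∂t_i + (d_i − m_i d_{l+1}) g_d`. -/
noncomputable def todaVPderiv {l : ℕ} {R : Type*} [CommRing R] (m : Fin l → ℕ) (i : Fin l)
    (g : TodaV l R) : TodaV l R :=
  fun d => todaPolyPderiv i (g d) +
    ((d (Fin.castSucc i) : ℤ) - (m i : ℤ) * (d (Fin.last l) : ℤ)) • g d

/-- The action on `V` of a matrix `A = (A^d)_d` with entries polynomial in the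
`e^{t_j}`:  `(A g)_d = Σ_{d' + d'' = d} A^{d''}(g_{d'})`, the endomorphism `A^{d''}`
of `ℕ →₀ R` being applied to each `t`-coefficient of the polynomial `g_{d'}`. -/
noncomputable def todaVMatAct {l : ℕ} {R : Type*} [CommRing R]
    (A : (Fin (l + 1) → ℕ) → ((ℕ →₀ R) →ₗ[R] (ℕ →₀ R)))
    (g : TodaV l R) : TodaV l R :=
  fun d => ∑ d' ∈ Finset.Iic d, Finsupp.mapRange.linearMap (A (d - d')) (g d')

lemma zsmul_cancel {M : Type*} [AddCommGroup M] [Module ℝ M] {c : ℤ} (hc : c ≠ 0)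
    {x : M} (h : c • x = 0) : x = 0 := by
  have h2 : ((c : ℝ)) • x = 0 := by rw [Int.cast_smul_eq_zsmul]; exact h
  have := congrArg (fun y => ((c : ℝ))⁻¹ • y) h2
  simpa [smul_smul, inv_mul_cancel₀ (show ((c:ℝ)) ≠ 0 from Int.cast_ne_zero.mpr hc)] using this

lemma nsmul_cancel {M : Type*} [AddCommGroup M] [Module ℝ M] {c : ℕ} (hc : c ≠ 0)
    {x : M} (h : c • x = 0) : x = 0 := by
  have : (c : ℤ) • x = 0 := by simpa using h
  exact zsmul_cancel (by exact_mod_cast hc) this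

lemma tri_inj {R : Type*} [CommRing R] [Algebra ℝ R] (B : (ℕ →₀ R) →ₗ[R] (ℕ →₀ R))
    (hB : ∀ k n : ℕ, k ≤ n → (B (Finsupp.single k 1) : ℕ →₀ R) n = 0) {c : ℤ} (hc : c ≠ 0)
    {x : ℕ →₀ R} (hx : B x = c • x) : x = 0 := by
  by_contra h
  have hne : x.support.Nonempty := Finsupp.support_nonempty_iff.mpr h
  set k := x.support.max' hne with hk
  have h1 : (B x) k = 0 := by
    have hxs : B x = x.sum fun j r => r • B (Finsupp.single j 1) := by
      conv_lhs => rw [← x.sum_single]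
      rw [map_finsuppSum]
      refine Finsupp.sum_congr fun j hj => ?_
      rw [← Finsupp.smul_single_one, map_smul]
    rw [hxs, Finsupp.sum_apply]
    refine Finset.sum_eq_zero fun j hj => ?_
    simp [Finsupp.smul_apply, hB j k (Finset.le_max' _ _ hj)]
  rw [hx, Finsupp.smul_apply] at h1
  exact (Finsupp.mem_support_iff.mp (x.support.max'_mem hne)) (zsmul_cancel hc h1)

lemma pderiv_apply {l : ℕ} {R : Type*} [CommRing R] (i : Fin l) (p : TodaPoly l R)
    (u : Fin l →₀ ℕ) :
    (todaPolyPderiv i p) u = (u i + 1) • p (u + Finsupp.single i 1) := by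
  classical
  rw [todaPolyPderiv, Finsupp.sum_apply, Finsupp.sum]
  have step : ∀ n ∈ p.support,
      (Finsupp.single (n - Finsupp.single i 1) ((n i) • p n)) u
      = if u + Finsupp.single i 1 = n then (u i + 1) • p n else 0 := by
    intro n _
    rw [Finsupp.single_apply]
    by_cases hn : u + Finsupp.single i 1 = n
    · have h1 : n - Finsupp.single i 1 = u := by
        rw [← hn]; ext j; simp
      have h2 : n i = u i + 1 := by rw [← hn]; simp
      rw [if_pos hn, if_pos h1, h2]
    · rw [if_neg hn]
      by_cases hni : n - Finsupp.single i 1 = u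
      · rw [if_pos hni]
        have hzero : n i = 0 := by
          by_contra hnz
          have hle : Finsupp.single i 1 ≤ n := by
            rw [Finsupp.single_le_iff]; omega
          exact hn (by rw [← hni, tsub_add_cancel_of_le hle])
        simp [hzero]
      · rw [if_neg hni]
  rw [Finset.sum_congr rfl step, Finset.sum_ite_eq p.support (u + Finsupp.single i 1)
    (fun n => (u i + 1) • p n)]
  by_cases hmem : u + Finsupp.single i 1 ∈ p.support
  · rw [if_pos hmem]
  · rw [if_neg hmem, Finsupp.notMem_support_iff.mp hmem, smul_zero]

theorem helper_stmt_2 (l : ℕ) (hl : 1 ≤ l) (m : Fin l → ℕ) (hm : ∀ i, 0 < m i)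
    (R : Type*) [CommRing R] [Algebra ℝ R]
    (A : Fin l → (Fin (l + 1) → ℕ) → ((ℕ →₀ R) →ₗ[R] (ℕ →₀ R)))
    (hupper : ∀ (i : Fin l) (k n : ℕ), k ≤ n →
      (A i 0 (Finsupp.single k 1) : ℕ →₀ R) n = 0)
    (g g' : TodaV l R)
    (hg : ∀ i : Fin l, todaVPderiv m i g = todaVMatAct (A i) g)
    (hg' : ∀ i : Fin l, todaVPderiv m i g' = todaVMatAct (A i) g')
    (h0 : ∀ d : Fin (l + 1) → ℕ,
      (∀ i : Fin l, d (Fin.castSucc i) = m i * d (Fin.last l)) →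
      (g d) 0 = (g' d) 0) :
    g = g' := by
  classical
  have hzap : ∀ (c : ℤ) (q : TodaPoly l R) (u : Fin l →₀ ℕ), (c • q) u = c • q u :=
    fun c q u => map_zsmul (Finsupp.applyAddHom u) c q
  have hkey : ∀ d : Fin (l + 1) → ℕ,
      (∀ d', d' ≤ d → d' ≠ d → g d' = g' d') → g d = g' d := by
    intro d IH
    set c : Fin l → ℤ :=
      fun i => (d (Fin.castSucc i) : ℤ) - (m i : ℤ) * (d (Fin.last l) : ℤ) with hcdef
    set p : TodaPoly l R := g d - g' d with hpdef
    suffices hp0 : p = 0 by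
      refine Finsupp.ext fun u => ?_
      have h1 := DFunLike.congr_fun hp0 u
      rw [hpdef, Finsupp.sub_apply] at h1
      simpa [sub_eq_zero] using h1
    -- the basic coefficientwise equation
    have heq : ∀ (i : Fin l) (u : Fin l →₀ ℕ),
        (u i + 1) • p (u + Finsupp.single i 1) + c i • p u = A i 0 (p u) := by
      intro i u
      have e1 := congrFun (hg i) d
      have e2 := congrFun (hg' i) d
      simp only [todaVPderiv, todaVMatAct] at e1 e2
      have e1u := DFunLike.congr_fun e1 u
      have e2u := DFunLike.congr_fun e2 u
      rw [Finsupp.add_apply, pderiv_apply, hzap, Finset.sum_apply'] at e1u e2u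
      simp only [Finsupp.mapRange.linearMap_apply, Finsupp.mapRange_apply] at e1u e2u
      have hsum : (∑ d' ∈ Finset.Iic d, (A i (d - d')) ((g d') u))
          - (∑ d' ∈ Finset.Iic d, (A i (d - d')) ((g' d') u)) = A i 0 (p u) := by
        rw [← Finset.sum_sub_distrib]
        rw [Finset.sum_eq_single_of_mem d (Finset.mem_Iic.mpr le_rfl)]
        · rw [← map_sub]
          have hdd : d - d = (0 : Fin (l + 1) → ℕ) := by funext j; simp
          rw [hdd]
          congr 1
        · intro d' hmem hne
          rw [IH d' (Finset.mem_Iic.mp hmem) hne, sub_self]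
      calc (u i + 1) • p (u + Finsupp.single i 1) + c i • p u
          = ((u i + 1) • (g d) (u + Finsupp.single i 1) + c i • (g d) u)
            - ((u i + 1) • (g' d) (u + Finsupp.single i 1) + c i • (g' d) u) := by
            rw [hpdef, Finsupp.sub_apply, Finsupp.sub_apply, smul_sub, smul_sub]; abel
        _ = (∑ d' ∈ Finset.Iic d, (A i (d - d')) ((g d') u))
            - (∑ d' ∈ Finset.Iic d, (A i (d - d')) ((g' d') u)) := by rw [e1u, e2u]
        _ = A i 0 (p u) := hsum
    by_cases hc : ∀ i, c i = 0
    · -- on the ray: induction on total degree of u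
      have hray : ∀ i : Fin l, d (Fin.castSucc i) = m i * d (Fin.last l) := by
        intro i
        have := sub_eq_zero.mp (hc i)
        exact_mod_cast this
      have hp00 : p 0 = 0 := by
        rw [hpdef, Finsupp.sub_apply, h0 d hray, sub_self]
      have hall : ∀ k : ℕ, ∀ u : Fin l →₀ ℕ, (u.sum fun _ n => n) = k → p u = 0 := by
        intro k
        induction k using Nat.strong_induction_on with
        | _ k IHk =>
        intro u hu
        rcases Nat.eq_zero_or_pos k with h0k | hpos
        · have hu0 : u = 0 := by
            ext j
            simp only [Finsupp.coe_zero, Pi.zero_apply]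
            by_contra hj
            have hjs : j ∈ u.support := Finsupp.mem_support_iff.mpr hj
            have h2 : u j ≤ ∑ x ∈ u.support, u x :=
              Finset.single_le_sum (f := fun j => u j) (fun _ _ => Nat.zero_le _) hjs
            rw [Finsupp.sum] at hu
            omega
          rw [hu0]; exact hp00
        · have hune : u ≠ 0 := by
            intro h
            rw [h, Finsupp.sum_zero_index] at hu
            omega
          obtain ⟨i, hi⟩ : ∃ i, u i ≠ 0 := by
            by_contra hcon
            push_neg at hcon
            exact hune (Finsupp.ext fun j => hcon j)
          set v : Fin l →₀ ℕ := u - Finsupp.single i 1 with hvdef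
          have hle : Finsupp.single i 1 ≤ u := by rw [Finsupp.single_le_iff]; omega
          have hv : v + Finsupp.single i 1 = u := tsub_add_cancel_of_le hle
          have hdeg : (v.sum fun _ n => n) = k - 1 := by
            have hsum : (u.sum fun _ n => n)
                = (v.sum fun _ n => n) + ((Finsupp.single i 1).sum fun _ n => n) := by
              rw [← hv, Finsupp.sum_add_index' (fun _ => rfl) (fun _ _ _ => rfl)]
            rw [Finsupp.sum_single_index rfl] at hsum
            omega
          have hpv : p v = 0 := IHk (k - 1) (by omega) v hdeg
          have hq := heq i v
          rw [hpv, smul_zero, add_zero, map_zero] at hq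
          have := nsmul_cancel (Nat.succ_ne_zero (v i)) hq
          rwa [hv] at this
      refine Finsupp.ext fun u => ?_
      rw [hall _ u rfl]; rfl
    · -- off the ray: downward induction on u i
      push_neg at hc
      obtain ⟨i, hci⟩ := hc
      set N : ℕ := p.support.sup (fun n => n i) + 1 with hNdef
      have hbig : ∀ u : Fin l →₀ ℕ, N ≤ u i → p u = 0 := by
        intro u hu
        by_contra h
        have hmem : u ∈ p.support := Finsupp.mem_support_iff.mpr h
        have h2 : u i ≤ p.support.sup fun n => n i := Finset.le_sup (f := fun n => n i) hmem
        omega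
      have hstep : ∀ k : ℕ, ∀ u : Fin l →₀ ℕ, N ≤ u i + k → p u = 0 := by
        intro k
        induction k with
        | zero => intro u hu; exact hbig u (by omega)
        | succ k IHk =>
          intro u hu
          have hnext : p (u + Finsupp.single i 1) = 0 := by
            apply IHk
            rw [Finsupp.add_apply, Finsupp.single_eq_same]
            omega
          have hq := heq i u
          rw [hnext, smul_zero, zero_add] at hq
          exact tri_inj (A i 0) (hupper i) hci hq.symm
      refine Finsupp.ext fun u => ?_
      rw [hstep N u (by omega)]; rfl
  have H : ∀ N : ℕ, ∀ d : Fin (l + 1) → ℕ, (∑ j, d j) = N → g d = g' d := by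
    intro N
    induction N using Nat.strong_induction_on with
    | _ N IHN =>
    intro d hd
    apply hkey
    intro d' hle hne
    have hlt : (∑ j, d' j) < ∑ j, d j := by
      obtain ⟨j, hj⟩ : ∃ j, d' j < d j := by
        by_contra hcon
        push_neg at hcon
        exact hne (funext fun j => le_antisymm (hle j) (hcon j))
      exact Finset.sum_lt_sum (fun j _ => hle j) ⟨j, Finset.mem_univ j, hj⟩
    exact IHN (∑ j, d' j) (by omega) d' rfl
  funext d
  exact H (∑ j, d j) d rfl


theorem stmt_2 (l : ℕ) (hl : 1 ≤ l) (m : Fin l → ℕ) (hm : ∀ i, 0 < m i)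
    (R : Type*) [CommRing R] [Algebra ℝ R]
    (A : Fin l → (Fin (l + 1) → ℕ) → ((ℕ →₀ R) →ₗ[R] (ℕ →₀ R)))
    -- the columns of each matrix `A i` are finitely supported
    (hfin : ∀ (i : Fin l) (k : ℕ),
      {d : Fin (l + 1) → ℕ | A i d (Finsupp.single k 1) ≠ 0}.Finite)
    -- (a) the matrices commute as operators on `V`
    (hab : ∀ (i j : Fin l) (g : TodaV l R),
      todaVMatAct (A i) (todaVMatAct (A j) g) = todaVMatAct (A j) (todaVMatAct (A i) g))
    -- (b) `∂_i A_j = ∂_j A_i`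
    (hb : ∀ (i j : Fin l) (d : Fin (l + 1) → ℕ),
      ((d (Fin.castSucc i) : ℤ) - (m i : ℤ) * (d (Fin.last l) : ℤ)) • A j d
        = ((d (Fin.castSucc j) : ℤ) - (m j : ℤ) * (d (Fin.last l) : ℤ)) • A i d)
    -- (c) the constant term `A_i^0` is strictly upper triangular …
    (hupper : ∀ (i : Fin l) (k n : ℕ), k ≤ n →
      (A i 0 (Finsupp.single k 1) : ℕ →₀ R) n = 0)
    -- … for `d ≠ 0`, `A_i^d` is strictly lower triangular …
    (hlower : ∀ (i : Fin l) (d : Fin (l + 1) → ℕ), d ≠ 0 → ∀ k n : ℕ, n ≤ k →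
      (A i d (Finsupp.single k 1) : ℕ →₀ R) n = 0)
    -- … and vanishes unless `d_i − m_i d_{l+1} ≠ 0`
    (hvan : ∀ (i : Fin l) (d : Fin (l + 1) → ℕ), d ≠ 0 →
      (d (Fin.castSucc i) : ℤ) - (m i : ℤ) * (d (Fin.last l) : ℤ) = 0 → A i d = 0)
    -- `g` and `g̃` both solve the system `∂_i g = A_i g`, `1 ≤ i ≤ l`
    (g g' : TodaV l R)
    (hg : ∀ i : Fin l, todaVPderiv m i g = todaVMatAct (A i) g)
    (hg' : ∀ i : Fin l, todaVPderiv m i g' = todaVMatAct (A i) g')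
    -- their degree-zero terms agree at every `d` on the ray `d_i = m_i d_{l+1}`
    (h0 : ∀ d : Fin (l + 1) → ℕ,
      (∀ i : Fin l, d (Fin.castSucc i) = m i * d (Fin.last l)) →
      (g d) 0 = (g' d) 0) :
    g = g' := by
  exact helper_stmt_2 l hl m hm R A hupper g g' hg hg' h0
end

section
/- Assume the setup below, with matrices A_1,…,A_l satisfying hypotheses (a)–(c). For every family (c_d) of elements of ℕ →₀ R, indexed by the multi-indices d = (d_1,…,d_{l+1}) ∈ ℕ^{l+1} satisfying d_1 = m_1 d_{l+1}, …, d_l = m_l d_{l+1}, there exists g ∈ V satisfying the system ∂_i g = A_i g for all 1 ≤ i ≤ l and such that g_d^0 = c_d for every such d. (Existence half of Proposition 6.1: a solution of the system can be constructed with arbitrarily prescribed degree-zero terms g_d^0 at those d.) -/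
namespace Toda

variable {l : ℕ} {R : Type*} [CommRing R] [Algebra ℝ R]

lemma todaPolyPderiv_apply (i : Fin l) (p : TodaPoly l R) (n : Fin l →₀ ℕ) :
    todaPolyPderiv i p n = (n i + 1) • p (n + Finsupp.single i 1) := by
  classical
  unfold todaPolyPderiv
  rw [Finsupp.sum, Finsupp.finset_sum_apply]
  rw [Finset.sum_eq_single (n + Finsupp.single i 1)]
  · rw [add_tsub_cancel_right]
    simp [Finsupp.single_eq_same]
  · intro b hb hne
    rcases Nat.eq_zero_or_pos (b i) with h0 | hpos
    · simp [h0]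
    · have : b - Finsupp.single i 1 ≠ n := by
        intro h
        apply hne
        ext x
        have := congrArg (fun f => f x) h
        simp only [Finsupp.tsub_apply, Finsupp.single_apply, Finsupp.add_apply] at this ⊢
        rcases eq_or_ne i x with rfl | hix
        · simp at this ⊢; omega
        · simp [hix] at this ⊢; omega
      rw [Finsupp.single_apply, if_neg this]
  · intro h
    rw [Finsupp.notMem_support_iff] at h
    simp [h]

noncomputable def dLin (i : Fin l) : TodaPoly l R →ₗ[R] TodaPoly l R where
  toFun := todaPolyPderiv i
  map_add' p q := by
    ext n
    simp [todaPolyPderiv_apply, smul_add]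
  map_smul' r p := by
    ext n
    simp only [todaPolyPderiv_apply, RingHom.id_apply, Finsupp.smul_apply]
    rw [smul_comm]

lemma dLin_apply (i : Fin l) (p : TodaPoly l R) : dLin i p = todaPolyPderiv i p := rfl

/-- spreading lemma for strictly-upper-triangular maps -/
lemma upper_spread (B : (ℕ →₀ R) →ₗ[R] (ℕ →₀ R))
    (hB : ∀ k n : ℕ, k ≤ n → B (Finsupp.single k 1) n = 0)
    (x : ℕ →₀ R) (k : ℕ) (h : B x k ≠ 0) : ∃ k', k < k' ∧ x k' ≠ 0 := by
  classical
  have hx : x = ∑ k' ∈ x.support, (x k') • Finsupp.single k' (1 : R) := by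
    conv_lhs => rw [← Finsupp.sum_single x]
    rw [Finsupp.sum]
    congr 1
    ext k'
    rw [Finsupp.smul_single, smul_eq_mul, mul_one]
  rw [hx, map_sum, Finsupp.finset_sum_apply] at h
  obtain ⟨k', hk', hne⟩ := Finset.exists_ne_zero_of_sum_ne_zero h
  refine ⟨k', ?_, Finsupp.mem_support_iff.mp hk'⟩
  by_contra hle
  push_neg at hle
  rw [map_smul, Finsupp.smul_apply, hB k' k hle, smul_zero] at hne
  exact hne rfl

lemma nsmul_cancel {M : Type*} [AddCommGroup M] [Module R M] {k : ℕ} (hk : 0 < k)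
    {x y : M} (h : k • x = k • y) : x = y := by
  have h2 : (algebraMap ℝ R (k : ℝ)) • x = (algebraMap ℝ R (k : ℝ)) • y := by
    rw [show ((k:ℝ)) = ((k:ℕ):ℝ) from rfl, map_natCast,
      Nat.cast_smul_eq_nsmul R, Nat.cast_smul_eq_nsmul R]
    exact h
  have h3 := congrArg (fun z => (algebraMap ℝ R ((k : ℝ)⁻¹)) • z) h2
  simp only [smul_smul, ← map_mul, inv_mul_cancel₀ (show (k:ℝ) ≠ 0 by positivity),
    map_one, one_smul] at h3
  exact h3

lemma zsmul_eq_algebraMap {M : Type*} [AddCommGroup M] [Module R M] (z : ℤ) (x : M) :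
    z • x = (algebraMap ℝ R (z : ℝ)) • x := by
  rw [show ((z:ℝ)) = ((z:ℤ):ℝ) from rfl, map_intCast, Int.cast_smul_eq_zsmul]


section Toolkit
variable {M : Type*} [AddCommGroup M] [Module R M]

lemma tsmulR_sub (a : R) (x y : TodaPoly l R) : a • (x - y) = a • x - a • y := smul_sub a x y
lemma tsmulZ_sub (z : ℤ) (x y : TodaPoly l R) : z • (x - y) = z • x - z • y := smul_sub z x y
lemma tsmulZ_add (z : ℤ) (x y : TodaPoly l R) : z • (x + y) = z • x + z • y := smul_add z x y
lemma tsmul_tsmul (a b : R) (x : TodaPoly l R) : a • b • x = (a * b) • x := smul_smul a b x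
lemma tone_smul (x : TodaPoly l R) : (1 : R) • x = x := one_smul R x
lemma tsum_sub_distrib {ι : Type*} (s : Finset ι) (f g : ι → TodaPoly l R) :
    ∑ j ∈ s, f j - ∑ j ∈ s, g j = ∑ j ∈ s, (f j - g j) :=
  (Finset.sum_sub_distrib (s := s) (f := f) (g := g)).symm

end Toolkit

section Lop

variable (i : Fin l) (B : (ℕ →₀ R) →ₗ[R] (ℕ →₀ R)) (z : ℤ)

/-- the locally nilpotent part of the operator `z + ∂_i - B` -/
noncomputable def nOp : TodaPoly l R →ₗ[R] TodaPoly l R where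
  toFun p := (algebraMap ℝ R ((z : ℝ)⁻¹)) • (Finsupp.mapRange.linearMap B p - dLin i p)
  map_add' p q := by
    simp only [map_add]
    rw [show (Finsupp.mapRange.linearMap B p + Finsupp.mapRange.linearMap B q)
        - (dLin i p + dLin i q) = (Finsupp.mapRange.linearMap B p - dLin i p)
        + (Finsupp.mapRange.linearMap B q - dLin i q) by abel, smul_add]
  map_smul' r p := by
    simp only [map_smul, RingHom.id_apply]
    module

lemma nOp_apply (p : TodaPoly l R) :
    nOp i B z p = (algebraMap ℝ R ((z : ℝ)⁻¹)) • (Finsupp.mapRange.linearMap B p - dLin i p) := rfl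

lemma z_smul_nOp (hz : z ≠ 0) (p : TodaPoly l R) :
    z • nOp i B z p = Finsupp.mapRange.linearMap B p - dLin i p := by
  rw [zsmul_eq_algebraMap (R := R) z (nOp i B z p), nOp_apply, tsmul_tsmul, ← map_mul,
    mul_inv_cancel₀ (show (z:ℝ) ≠ 0 by exact_mod_cast hz), map_one, tone_smul]

lemma nOp_pow_eq_zero (hB : ∀ k n : ℕ, k ≤ n → B (Finsupp.single k 1) n = 0)
    (K₀ : ℕ) :
    ∀ (M : ℕ) (q : TodaPoly l R),
      (∀ n k, q n k ≠ 0 → (n.sum fun _ v => v) * K₀ + k < M ∧ k < K₀) →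
      ((nOp i B z) ^ M) q = 0 := by
  intro M
  induction M with
  | zero =>
    intro q hq
    have : q = 0 := by
      ext n k
      by_contra h
      exact absurd (hq n k h).1 (by omega)
    simp [this]
  | succ M ih =>
    intro q hq
    rcases Nat.eq_zero_or_pos K₀ with hK | hK
    · have : q = 0 := by
        ext n k
        by_contra h
        exact absurd (hq n k h).2 (by omega)
      simp [this]
    rw [pow_succ, Module.End.mul_apply]
    apply ih
    intro n k hk
    -- (nOp q) n k ≠ 0 implies B-case or deriv-case
    have hcase : B (q n) k ≠ 0 ∨ todaPolyPderiv i q n k ≠ 0 := by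
      by_contra hc
      push_neg at hc
      apply hk
      rw [nOp_apply]
      rw [Finsupp.smul_apply, Finsupp.smul_apply, Finsupp.sub_apply, Finsupp.sub_apply]
      rw [Finsupp.mapRange.linearMap_apply, Finsupp.mapRange_apply, dLin_apply]
      rw [hc.1, hc.2, sub_zero, smul_zero]
    rcases hcase with hc | hc
    · obtain ⟨k', hkk', hk'⟩ := upper_spread B hB (q n) k hc
      obtain ⟨h1, h2⟩ := hq n k' hk'
      exact ⟨by omega, by omega⟩
    · rw [todaPolyPderiv_apply] at hc
      have hq' : q (n + Finsupp.single i 1) k ≠ 0 := by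
        intro h
        rw [Finsupp.smul_apply, h, smul_zero] at hc
        exact hc rfl
      obtain ⟨h1, h2⟩ := hq (n + Finsupp.single i 1) k hq'
      have hsum : ((n + Finsupp.single i 1).sum fun _ v => v) = (n.sum fun _ v => v) + 1 := by
        rw [Finsupp.sum_add_index (by simp) (by intros; rfl)]
        simp
      rw [hsum] at h1
      constructor
      · nlinarith
      · exact h2

lemma exists_nOp_pow_zero (hB : ∀ k n : ℕ, k ≤ n → B (Finsupp.single k 1) n = 0)
    (q : TodaPoly l R) : ∃ M, ((nOp i B z) ^ M) q = 0 := by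
  classical
  set K₀ : ℕ := 1 + q.support.sup (fun n => (q n).support.sup id) with hK₀
  set S : ℕ := q.support.sup (fun n => n.sum fun _ v => v) with hS
  refine ⟨(S + 1) * K₀, nOp_pow_eq_zero i B z hB K₀ _ q ?_⟩
  intro n k hk
  have hn : n ∈ q.support := Finsupp.mem_support_iff.mpr (by
    intro h; rw [h] at hk; exact hk rfl)
  have hkmem : k ∈ (q n).support := Finsupp.mem_support_iff.mpr hk
  have hk1 : k ≤ (q n).support.sup id := Finset.le_sup (f := id) hkmem
  have hk2 : (q n).support.sup id ≤ q.support.sup (fun n => (q n).support.sup id) :=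
    Finset.le_sup (f := fun n => (q n).support.sup id) hn
  have hkK : k < K₀ := by omega
  have hnS : (n.sum fun _ v => v) ≤ S := Finset.le_sup (f := fun n => n.sum fun _ v => v) hn
  constructor
  · calc (n.sum fun _ v => v) * K₀ + k ≤ S * K₀ + (K₀ - 1) := by
          have := Nat.mul_le_mul_right K₀ hnS
          omega
      _ < (S + 1) * K₀ := by
          have h1 : 1 ≤ K₀ := by omega
          have h2 : (S + 1) * K₀ = S * K₀ + K₀ := by ring
          omega
  · exact hkK

/-- the operator `p ↦ z•p + ∂_i p - B p` -/
noncomputable def lop (p : TodaPoly l R) : TodaPoly l R :=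
  z • p + todaPolyPderiv i p - Finsupp.mapRange.linearMap B p

lemma lop_eq (hz : z ≠ 0) (p : TodaPoly l R) :
    lop i B z p = z • (p - nOp i B z p) := by
  rw [tsmulZ_sub z p (nOp i B z p), z_smul_nOp i B z hz, lop, dLin_apply]
  abel

lemma lop_inj (hz : z ≠ 0) (hB : ∀ k n : ℕ, k ≤ n → B (Finsupp.single k 1) n = 0)
    {p : TodaPoly l R} (h : lop i B z p = 0) : p = 0 := by
  rw [lop_eq i B z hz,
    zsmul_eq_algebraMap (R := R) z (p - nOp i B z p)] at h
  have h2 := congrArg (fun w => (algebraMap ℝ R ((z : ℝ)⁻¹)) • w) h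
  simp only [smul_zero] at h2
  rw [tsmul_tsmul, ← map_mul, inv_mul_cancel₀ (show (z:ℝ) ≠ 0 by exact_mod_cast hz),
    map_one, tone_smul] at h2
  have hfix : p = nOp i B z p := by
    have h4 : p - nOp i B z p = 0 → p = nOp i B z p := fun hh => sub_eq_zero.mp hh
    exact h4 h2
  have hiter : ∀ M : ℕ, p = ((nOp i B z) ^ M) p := by
    intro M
    induction M with
    | zero => simp
    | succ M ih =>
      rw [pow_succ, Module.End.mul_apply, ← hfix]
      exact ih
  obtain ⟨M, hM⟩ := exists_nOp_pow_zero i B z hB p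
  rw [hiter M, hM]

lemma lop_surj (hz : z ≠ 0) (hB : ∀ k n : ℕ, k ≤ n → B (Finsupp.single k 1) n = 0)
    (b : TodaPoly l R) : ∃ p, lop i B z p = b := by
  set b' : TodaPoly l R := (algebraMap ℝ R ((z : ℝ)⁻¹)) • b with hb'
  obtain ⟨M, hM⟩ := exists_nOp_pow_zero i B z hB b'
  set N := nOp i B z with hN
  refine ⟨∑ j ∈ Finset.range M, (N ^ j) b', ?_⟩
  have h3 : N (∑ j ∈ Finset.range M, (N ^ j) b') = ∑ j ∈ Finset.range M, (N ^ (j+1)) b' := by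
    rw [map_sum]
    congr 1
    funext j
    rw [pow_succ', Module.End.mul_apply]
  have key : (∑ j ∈ Finset.range M, (N ^ j) b') - N (∑ j ∈ Finset.range M, (N ^ j) b') = b' := by
    rw [h3, tsum_sub_distrib (Finset.range M) (fun j => (N ^ j) b') (fun j => (N ^ (j+1)) b'),
      Finset.sum_range_sub' (f := fun j => (N ^ j) b') M]
    rw [hM, pow_zero, Module.End.one_apply]
    exact sub_zero b'
  rw [lop_eq i B z hz, key, hb',
    zsmul_eq_algebraMap (R := R) z ((algebraMap ℝ R ((z : ℝ)⁻¹)) • b),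
    tsmul_tsmul, ← map_mul, mul_inv_cancel₀ (show (z:ℝ) ≠ 0 by exact_mod_cast hz),
    map_one, tone_smul]

end Lop

end Toda

namespace Toda
variable {l : ℕ} {R : Type*} [CommRing R] [Algebra ℝ R]

section Poincare

lemma fin_sum_tsub_single {n : Fin l →₀ ℕ} {i : Fin l} (h : n i ≠ 0) :
    ((n - Finsupp.single i 1).sum fun _ v => v) + 1 = n.sum fun _ v => v := by
  have hle : Finsupp.single i 1 ≤ n := by
    rw [Finsupp.single_le_iff]
    omega
  conv_rhs => rw [← tsub_add_cancel_of_le hle]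
  rw [Finsupp.sum_add_index' (by simp) (by intros; rfl)]
  rw [Finsupp.sum_single_index rfl]

lemma fin_sum_add_single (n : Fin l →₀ ℕ) (i : Fin l) :
    ((n + Finsupp.single i 1).sum fun _ v => v) = (n.sum fun _ v => v) + 1 := by
  rw [Finsupp.sum_add_index' (by simp) (by intros; rfl), Finsupp.sum_single_index rfl]

lemma nat_smul_inv_smul {M : Type*} [AddCommGroup M] [Module R M] {k : ℕ} (hk : k ≠ 0)
    (x : M) : k • ((algebraMap ℝ R ((k:ℝ)⁻¹)) • x) = x := by
  have h1 : (k : ℕ) • ((algebraMap ℝ R ((k:ℝ)⁻¹)) • x)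
      = ((algebraMap ℝ R (k : ℝ))) • ((algebraMap ℝ R ((k:ℝ)⁻¹)) • x) := by
    rw [show ((k:ℝ)) = ((k:ℕ):ℝ) from rfl, map_natCast, Nat.cast_smul_eq_nsmul R]
  rw [h1, smul_smul, ← map_mul, mul_inv_cancel₀ (show (k:ℝ) ≠ 0 by
    exact_mod_cast hk), map_one, one_smul]

variable (B : Fin l → ((ℕ →₀ R) →ₗ[R] (ℕ →₀ R))) (b : Fin l → TodaPoly l R) (c : ℕ →₀ R)

noncomputable def pq : (Fin l →₀ ℕ) → (ℕ →₀ R) := fun n =>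
  if h0 : n = 0 then c
  else
    have hne : ∃ i, n i ≠ 0 := by
      obtain ⟨a, ha⟩ := Finsupp.ne_iff.mp h0
      exact ⟨a, by simpa using ha⟩
    let i := hne.choose
    have hi : n i ≠ 0 := hne.choose_spec
    have : ((n - Finsupp.single i 1).sum fun _ v => v) < n.sum fun _ v => v := by
      have := fin_sum_tsub_single hi
      omega
    (algebraMap ℝ R (((n i : ℕ):ℝ)⁻¹)) •
      (B i (pq (n - Finsupp.single i 1)) + b i (n - Finsupp.single i 1))
termination_by n => n.sum fun _ v => v

lemma pq_zero : pq B b c 0 = c := by rw [pq]; simp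

lemma fsmul_add (k : ℕ) (x y : ℕ →₀ R) : k • (x + y) = k • x + k • y := smul_add k x y
lemma fsmul_comm (a k : ℕ) (x : ℕ →₀ R) : a • k • x = k • a • x := smul_comm a k x

lemma pq_spec (n : Fin l →₀ ℕ) (h0 : n ≠ 0) :
    ∃ j, n j ≠ 0 ∧ pq B b c n = (algebraMap ℝ R (((n j : ℕ):ℝ)⁻¹)) •
      (B j (pq B b c (n - Finsupp.single j 1)) + b j (n - Finsupp.single j 1)) := by
  have hne : ∃ i, n i ≠ 0 := by
    obtain ⟨a, ha⟩ := Finsupp.ne_iff.mp h0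
    exact ⟨a, by simpa using ha⟩
  refine ⟨hne.choose, hne.choose_spec, ?_⟩
  conv_lhs => rw [pq]
  rw [dif_neg h0]

lemma compat_coeff
    (hcompat : ∀ i j, todaPolyPderiv j (b i) + Finsupp.mapRange.linearMap (B i) (b j)
      = todaPolyPderiv i (b j) + Finsupp.mapRange.linearMap (B j) (b i))
    (i j : Fin l) (m : Fin l →₀ ℕ) :
    (m j + 1) • (b i) (m + Finsupp.single j 1) + B i ((b j) m)
      = (m i + 1) • (b j) (m + Finsupp.single i 1) + B j ((b i) m) := by
  have h := congrArg (fun p => p m) (hcompat i j)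
  simp only [Finsupp.add_apply, todaPolyPderiv_apply, Finsupp.mapRange.linearMap_apply,
    Finsupp.mapRange_apply] at h
  exact h

lemma pq_rec (hBcomm : ∀ i j x, B i (B j x) = B j (B i x))
    (hcompat : ∀ i j, todaPolyPderiv j (b i) + Finsupp.mapRange.linearMap (B i) (b j)
      = todaPolyPderiv i (b j) + Finsupp.mapRange.linearMap (B j) (b i)) :
    ∀ (s : ℕ) (n : Fin l →₀ ℕ), (n.sum fun _ v => v) ≤ s → ∀ i : Fin l,
      (n i + 1) • pq B b c (n + Finsupp.single i 1) = B i (pq B b c n) + b i n := by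
  intro s
  induction s using Nat.strong_induction_on with
  | _ s ih =>
  intro n hns i
  set n' := n + Finsupp.single i 1 with hn'
  have hn'i : n' i = n i + 1 := by
    rw [hn', Finsupp.add_apply, Finsupp.single_eq_same]
  have hn'0 : n' ≠ 0 := by
    intro h
    have := congrArg (fun f => f i) h
    simp only [Finsupp.coe_zero, Pi.zero_apply] at this
    omega
  obtain ⟨j, hj, hpq'⟩ := pq_spec B b c n' hn'0
  by_cases hji : j = i
  · subst hji
    rw [hpq', hn'i, add_tsub_cancel_right]
    exact nat_smul_inv_smul (by omega) _
  · -- j ≠ i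
    have hn'j : n' j = n j := by
      rw [hn', Finsupp.add_apply, Finsupp.single_apply, if_neg (Ne.symm hji), add_zero]
    have hnj : n j ≠ 0 := by rwa [hn'j] at hj
    set m := n - Finsupp.single j 1 with hm
    have hmj : m j + 1 = n j := by
      rw [hm, Finsupp.tsub_apply, Finsupp.single_eq_same]
      omega
    have hmi : m i = n i := by
      rw [hm, Finsupp.tsub_apply, Finsupp.single_apply, if_neg hji]
      omega
    have hmn : m + Finsupp.single j 1 = n := by
      apply tsub_add_cancel_of_le
      rw [Finsupp.single_le_iff]
      omega
    have hsub : n' - Finsupp.single j 1 = m + Finsupp.single i 1 := by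
      ext a
      simp only [hn', hm, Finsupp.tsub_apply, Finsupp.add_apply, Finsupp.single_apply]
      rcases eq_or_ne i a with rfl | hia
      · simp only [if_pos rfl, if_neg (show ¬ j = i from hji)]
        omega
      · rcases eq_or_ne j a with rfl | hja
        · simp only [if_pos rfl, if_neg hia]
          omega
        · simp only [if_neg hia, if_neg hja]
          omega
    have hmsum : (m.sum fun _ v => v) + 1 = n.sum fun _ v => v := fin_sum_tsub_single hnj
    have hs1 : 1 ≤ s := by
      have h1 : 1 ≤ n.sum fun _ v => v := by omega
      omega
    have ih1 : (m i + 1) • pq B b c (m + Finsupp.single i 1) = B i (pq B b c m) + b i m :=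
      ih (s-1) (by omega) m (by omega) i
    have ih2 : (m j + 1) • pq B b c (m + Finsupp.single j 1) = B j (pq B b c m) + b j m :=
      ih (s-1) (by omega) m (by omega) j
    rw [hmn] at ih2
    rw [hmj] at ih2
    rw [hmi] at ih1
    have compat := compat_coeff B b hcompat i j m
    rw [hmj, hmn, hmi] at compat
    -- multiply goal by (n j)
    apply nsmul_cancel (R := R) (show 0 < n j by omega)
    have e1 : (n j) • ((n i + 1) • pq B b c n') = (n i + 1) • ((n j) • pq B b c n') :=
      fsmul_comm _ _ _
    have e2 : (n j) • pq B b c n'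
        = B j (pq B b c (m + Finsupp.single i 1)) + b j (m + Finsupp.single i 1) := by
      rw [hpq', hn'j, hsub]
      exact nat_smul_inv_smul hnj _
    have e3 : (n i + 1) • (B j (pq B b c (m + Finsupp.single i 1))
          + b j (m + Finsupp.single i 1))
        = B j ((n i + 1) • pq B b c (m + Finsupp.single i 1))
          + (n i + 1) • b j (m + Finsupp.single i 1) := by
      rw [fsmul_add, map_nsmul]
    have e4 : (n j) • (B i (pq B b c n) + b i n)
        = B i ((n j) • pq B b c n) + (n j) • b i n := by
      rw [fsmul_add, map_nsmul]
    rw [e1, e2, e3, ih1, e4, ih2]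
    rw [map_add (B j) (B i (pq B b c m)) (b i m),
      map_add (B i) (B j (pq B b c m)) (b j m), hBcomm j i]
    -- remaining: B i (B j pq m) + (B j (b i m) + (n i+1) • b j (m+e_i))
    --          = B i (B j pq m) + B i (b j m) + (n j) • b i n
    have final : B j (b i m) + (n i + 1) • b j (m + Finsupp.single i 1)
        = B i (b j m) + (n j) • b i n := by
      rw [add_comm (B j (b i m))]
      rw [add_comm (B i (b j m))]
      exact compat.symm
    calc B i (B j (pq B b c m)) + B j (b i m) + (n i + 1) • b j (m + Finsupp.single i 1)
        = B i (B j (pq B b c m)) + (B j (b i m) + (n i + 1) • b j (m + Finsupp.single i 1)) := by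
          rw [add_assoc]
      _ = B i (B j (pq B b c m)) + (B i (b j m) + (n j) • b i n) := by rw [final]
      _ = B i (B j (pq B b c m)) + B i (b j m) + (n j) • b i n := by rw [add_assoc]

lemma apply_le_sum (n : Fin l →₀ ℕ) (a : Fin l) : n a ≤ n.sum fun _ v => v := by
  by_cases h : n a = 0
  · rw [h]; exact Nat.zero_le _
  · exact Finset.single_le_sum (f := fun x => n x) (fun _ _ => Nat.zero_le _)
      (Finsupp.mem_support_iff.mpr h)

lemma pq_bound (hBupper : ∀ i (k u : ℕ), k ≤ u → B i (Finsupp.single k 1) u = 0) :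
    ∃ M₀ : ℕ, ∀ n k, pq B b c n k ≠ 0 → (n.sum fun _ v => v) + k < M₀ := by
  classical
  set M₀ : ℕ := (c.support.sup id + 1) ⊔
    (Finset.univ.sup (fun i : Fin l =>
      ((b i).support.sup (fun n' => (n'.sum fun _ v => v) + ((b i n').support.sup id))) + 2))
    with hM₀
  have hc : ∀ k, c k ≠ 0 → k < M₀ := by
    intro k hk
    have h1 : k ≤ c.support.sup id := Finset.le_sup (f := id) (Finsupp.mem_support_iff.mpr hk)
    have h2 : c.support.sup id + 1 ≤ M₀ := le_max_left _ _
    omega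
  have hbb : ∀ (i : Fin l) n' k, (b i) n' k ≠ 0 → (n'.sum fun _ v => v) + k + 1 < M₀ := by
    intro i n' k hk
    have hn' : n' ∈ (b i).support := Finsupp.mem_support_iff.mpr (by
      intro h; rw [h] at hk; simp at hk)
    have h1 : (n'.sum fun _ v => v) + ((b i n').support.sup id)
        ≤ (b i).support.sup (fun n' => (n'.sum fun _ v => v) + ((b i n').support.sup id)) :=
      Finset.le_sup (f := fun n' => (n'.sum fun _ v => v) + ((b i n').support.sup id)) hn'
    have h2 : k ≤ (b i n').support.sup id := Finset.le_sup (f := id)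
      (Finsupp.mem_support_iff.mpr hk)
    have h3 : ((b i).support.sup (fun n' => (n'.sum fun _ v => v)
        + ((b i n').support.sup id))) + 2 ≤ Finset.univ.sup (fun i : Fin l =>
      ((b i).support.sup (fun n' => (n'.sum fun _ v => v) + ((b i n').support.sup id))) + 2) :=
      Finset.le_sup (f := fun i : Fin l =>
        ((b i).support.sup (fun n' => (n'.sum fun _ v => v) + ((b i n').support.sup id))) + 2)
        (Finset.mem_univ i)
    have h4 : Finset.univ.sup (fun i : Fin l =>
      ((b i).support.sup (fun n' => (n'.sum fun _ v => v) + ((b i n').support.sup id))) + 2)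
        ≤ M₀ := le_max_right _ _
    omega
  refine ⟨M₀, ?_⟩
  suffices H : ∀ (s : ℕ) (n : Fin l →₀ ℕ), (n.sum fun _ v => v) ≤ s →
      ∀ k, pq B b c n k ≠ 0 → (n.sum fun _ v => v) + k < M₀ by
    exact fun n k h => H _ n le_rfl k h
  intro s
  induction s using Nat.strong_induction_on with
  | _ s ih =>
  intro n hs k hk
  by_cases h0 : n = 0
  · subst h0
    rw [pq_zero] at hk
    have := hc k hk
    simp only [Finsupp.sum_zero_index]
    omega
  · obtain ⟨j, hj, hpq'⟩ := pq_spec B b c n h0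
    rw [hpq'] at hk
    rw [Finsupp.smul_apply] at hk
    have hk2 : (B j (pq B b c (n - Finsupp.single j 1))
        + b j (n - Finsupp.single j 1)) k ≠ 0 := by
      intro h; rw [h, smul_zero] at hk; exact hk rfl
    rw [Finsupp.add_apply] at hk2
    set m := n - Finsupp.single j 1 with hm
    have hmsum : (m.sum fun _ v => v) + 1 = n.sum fun _ v => v := fin_sum_tsub_single hj
    have hs1 : 1 ≤ s := by omega
    have hcase : B j (pq B b c m) k ≠ 0 ∨ b j m k ≠ 0 := by
      by_contra hcc
      push_neg at hcc
      rw [hcc.1, hcc.2] at hk2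
      exact hk2 (by rw [add_zero])
    rcases hcase with hcx | hcy
    · obtain ⟨k', hkk', hk'⟩ := upper_spread (B j) (hBupper j) _ k hcx
      have := ih (s-1) (by omega) m (by omega) k' hk'
      omega
    · have := hbb j m k hcy
      omega

/-- solvability of the compatible constant-coefficient system with prescribed constant term -/
lemma poincare (hBcomm : ∀ i j x, B i (B j x) = B j (B i x))
    (hBupper : ∀ i (k u : ℕ), k ≤ u → B i (Finsupp.single k 1) u = 0)
    (hcompat : ∀ i j, todaPolyPderiv j (b i) + Finsupp.mapRange.linearMap (B i) (b j)
      = todaPolyPderiv i (b j) + Finsupp.mapRange.linearMap (B j) (b i)) :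
    ∃ p : TodaPoly l R,
      (∀ i, todaPolyPderiv i p = Finsupp.mapRange.linearMap (B i) p + b i) ∧ p 0 = c := by
  classical
  obtain ⟨M₀, hM₀⟩ := pq_bound B b c hBupper
  set mbound : Fin l →₀ ℕ := Finsupp.equivFunOnFinite.symm (fun _ => M₀) with hmb
  have hsupport : ∀ n, pq B b c n ≠ 0 → n ∈ Finset.Iic mbound := by
    intro n hn
    rw [Finset.mem_Iic]
    refine Finsupp.le_def.mpr ?_
    intro a
    obtain ⟨k, hk⟩ := Finsupp.ne_iff.mp hn
    have h1 := hM₀ n k (by simpa using hk)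
    have h2 := apply_le_sum n a
    have h3 : mbound a = M₀ := rfl
    omega
  set p : TodaPoly l R := Finsupp.onFinset (Finset.Iic mbound) (pq B b c) hsupport with hpdef
  have hp : ∀ n, p n = pq B b c n := fun n => rfl
  refine ⟨p, ?_, by rw [hp 0, pq_zero]⟩
  intro i
  ext n : 1
  rw [todaPolyPderiv_apply, Finsupp.add_apply, Finsupp.mapRange.linearMap_apply,
    Finsupp.mapRange_apply, hp (n + Finsupp.single i 1), hp n]
  exact pq_rec B b c hBcomm hcompat (n.sum fun _ v => v) n le_rfl i

end Poincare
end Toda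

namespace Toda
variable {l : ℕ} {R : Type*} [CommRing R] [Algebra ℝ R]

section Sol

def alphaZ (m : Fin l → ℕ) (i : Fin l) (d : Fin (l+1) → ℕ) : ℤ :=
  (d (Fin.castSucc i) : ℤ) - (m i : ℤ) * (d (Fin.last l) : ℤ)

lemma alphaZ_tsub (m : Fin l → ℕ) (i : Fin l) {d' d : Fin (l+1) → ℕ} (h : d' ≤ d) :
    alphaZ m i (d - d') = alphaZ m i d - alphaZ m i d' := by
  unfold alphaZ
  have h1 : ∀ x, (d - d') x = d x - d' x := fun x => rfl
  rw [h1, h1, Nat.cast_sub (h _), Nat.cast_sub (h _)]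
  ring

lemma dsub_self (d : Fin (l+1) → ℕ) : d - d = 0 := by
  funext x
  exact Nat.sub_self _

lemma sum_lt_of_mem_erase {d' d : Fin (l+1) → ℕ}
    (h : d' ∈ (Finset.Iic d).erase d) : (∑ x, d' x) < ∑ x, d x := by
  rw [Finset.mem_erase, Finset.mem_Iic] at h
  obtain ⟨hne, hle⟩ := h
  have hx : ∃ x, d' x < d x := by
    by_contra hc
    push_neg at hc
    exact hne (funext fun x => le_antisymm (hle x) (hc x))
  obtain ⟨x, hx⟩ := hx
  exact Finset.sum_lt_sum (fun y _ => hle y) ⟨x, Finset.mem_univ x, hx⟩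

variable (m : Fin l → ℕ) (A : Fin l → (Fin (l + 1) → ℕ) → ((ℕ →₀ R) →ₗ[R] (ℕ →₀ R)))
  (c : (Fin (l + 1) → ℕ) → (ℕ →₀ R))

/-- lower-order part of the matrix action -/
noncomputable def bvecM (B : (Fin (l + 1) → ℕ) → ((ℕ →₀ R) →ₗ[R] (ℕ →₀ R)))
    (h : TodaV l R) (d : Fin (l+1) → ℕ) : TodaPoly l R :=
  ∑ d' ∈ (Finset.Iic d).erase d, Finsupp.mapRange.linearMap (B (d - d')) (h d')

lemma matAct_split (B : (Fin (l + 1) → ℕ) → ((ℕ →₀ R) →ₗ[R] (ℕ →₀ R)))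
    (h : TodaV l R) (d : Fin (l+1) → ℕ) :
    todaVMatAct B h d = Finsupp.mapRange.linearMap (B 0) (h d) + bvecM B h d := by
  unfold todaVMatAct bvecM
  rw [← Finset.sum_erase_add (Finset.Iic d)
    (fun d' => Finsupp.mapRange.linearMap (B (d - d')) (h d'))
    (Finset.mem_Iic.mpr le_rfl), dsub_self]
  exact add_comm _ _

lemma bvecM_congr (B : (Fin (l + 1) → ℕ) → ((ℕ →₀ R) →ₗ[R] (ℕ →₀ R)))
    {h₁ h₂ : TodaV l R} (d : Fin (l+1) → ℕ)
    (hag : ∀ d' ∈ (Finset.Iic d).erase d, h₁ d' = h₂ d') :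
    bvecM B h₁ d = bvecM B h₂ d :=
  Finset.sum_congr rfl (fun d' hd' => by rw [hag d' hd'])

/-- the error operator `∂_i - A_i` -/
noncomputable def eOp (i : Fin l) (h : TodaV l R) : TodaV l R :=
  todaVPderiv m i h - todaVMatAct (A i) h

lemma eOp_apply (i : Fin l) (h : TodaV l R) (d : Fin (l+1) → ℕ) :
    eOp m A i h d = todaPolyPderiv i (h d) + alphaZ m i d • h d - todaVMatAct (A i) h d := rfl

lemma eOp_congr (i : Fin l) {h₁ h₂ : TodaV l R} (d : Fin (l+1) → ℕ)
    (hag : ∀ d' ∈ Finset.Iic d, h₁ d' = h₂ d') :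
    eOp m A i h₁ d = eOp m A i h₂ d := by
  rw [eOp_apply, eOp_apply, hag d (Finset.mem_Iic.mpr le_rfl)]
  congr 1
  unfold todaVMatAct
  exact Finset.sum_congr rfl (fun d' hd' => by rw [hag d' hd'])

lemma tpd_zero (i : Fin l) : todaPolyPderiv i (0 : TodaPoly l R) = 0 := by
  ext n : 1
  rw [todaPolyPderiv_apply]
  simp

end Sol
end Toda

namespace Toda
variable {l : ℕ} {R : Type*} [CommRing R] [Algebra ℝ R]

section Curvature

variable (m : Fin l → ℕ) (A : Fin l → (Fin (l + 1) → ℕ) → ((ℕ →₀ R) →ₗ[R] (ℕ →₀ R)))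

lemma tsum_add_distrib {ι : Type*} (s : Finset ι) (f g : ι → TodaPoly l R) :
    ∑ j ∈ s, f j + ∑ j ∈ s, g j = ∑ j ∈ s, (f j + g j) :=
  (Finset.sum_add_distrib (s := s) (f := f) (g := g)).symm

lemma tzsmul_sum {ι : Type*} (z : ℤ) (s : Finset ι) (f : ι → TodaPoly l R) :
    z • ∑ j ∈ s, f j = ∑ j ∈ s, z • f j :=
  Finset.smul_sum (r := z) (s := s) (f := f)

lemma mapRange_zsmul (z : ℤ) (L : (ℕ →₀ R) →ₗ[R] (ℕ →₀ R)) (x : TodaPoly l R) :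
    Finsupp.mapRange.linearMap (z • L) x = z • Finsupp.mapRange.linearMap L x := by
  ext n : 1
  rw [Finsupp.mapRange.linearMap_apply, Finsupp.mapRange_apply, Finsupp.smul_apply,
    Finsupp.mapRange.linearMap_apply, Finsupp.mapRange_apply, LinearMap.smul_apply]

lemma todaVPderiv_apply' (i : Fin l) (h : TodaV l R) (d : Fin (l+1) → ℕ) :
    todaVPderiv m i h d = dLin i (h d) + alphaZ m i d • h d := rfl

lemma tmap_add (f : TodaPoly l R →ₗ[R] TodaPoly l R) (x y : TodaPoly l R) :
    f (x + y) = f x + f y := map_add f x y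

lemma tmap_sub (f : TodaPoly l R →ₗ[R] TodaPoly l R) (x y : TodaPoly l R) :
    f (x - y) = f x - f y := map_sub f x y

lemma tmap_zsmul (f : TodaPoly l R →ₗ[R] TodaPoly l R) (z : ℤ) (x : TodaPoly l R) :
    f (z • x) = z • f x := map_zsmul f z x

lemma tsubZ_smul (a b : ℤ) (x : TodaPoly l R) : (a - b) • x = a • x - b • x := sub_smul a b x

lemma tzero_sub (x : TodaPoly l R) : (0 : TodaPoly l R) - x = -x := zero_sub x

lemma tsub_self (x : TodaPoly l R) : x - x = 0 := sub_self x

lemma tmap_neg (f : TodaPoly l R →ₗ[R] TodaPoly l R) (x : TodaPoly l R) : f (-x) = - f x := by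
  have h := tmap_sub f 0 x
  rw [map_zero f] at h
  rw [tzero_sub, tzero_sub] at h
  exact h

lemma dLin_comm (i j : Fin l) (p : TodaPoly l R) :
    dLin i (dLin j p) = dLin j (dLin i p) := by
  classical
  ext n : 1
  simp only [dLin_apply, todaPolyPderiv_apply, Finsupp.smul_apply, Finsupp.add_apply,
    Finsupp.single_apply]
  rw [smul_smul, smul_smul]
  rw [show n + Finsupp.single i 1 + Finsupp.single j 1
      = n + Finsupp.single j 1 + Finsupp.single i 1 by
    rw [add_assoc, add_assoc, add_comm (Finsupp.single i 1)]]
  congr 1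
  rcases eq_or_ne i j with rfl | hij
  · simp
  · simp only [Finsupp.add_apply, Finsupp.single_apply, if_neg hij, if_neg (Ne.symm hij)]
    ring

lemma dLin_mapRange (i : Fin l) (B : (ℕ →₀ R) →ₗ[R] (ℕ →₀ R)) (p : TodaPoly l R) :
    dLin i (Finsupp.mapRange.linearMap B p) = Finsupp.mapRange.linearMap B (dLin i p) := by
  ext n : 1
  simp only [dLin_apply, todaPolyPderiv_apply, Finsupp.mapRange.linearMap_apply,
    Finsupp.mapRange_apply]
  rw [map_nsmul]

/-- commutation of the twisted derivatives -/
lemma psi_psi (i j : Fin l) (h : TodaV l R) :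
    todaVPderiv m i (todaVPderiv m j h) = todaVPderiv m j (todaVPderiv m i h) := by
  funext d
  simp only [todaVPderiv_apply']
  rw [tmap_add (dLin i), tmap_add (dLin j), tmap_zsmul (dLin i), tmap_zsmul (dLin j),
    dLin_comm i j]
  rw [tsmulZ_add (alphaZ m i d), tsmulZ_add (alphaZ m j d)]
  rw [smul_comm (alphaZ m i d) (alphaZ m j d) (h d)]
  abel

/-- the mixed term in the commutator of `∂_i` and the action of `A_j` -/
noncomputable def gam (i j : Fin l) (h : TodaV l R) : TodaV l R :=
  fun d => ∑ d' ∈ Finset.Iic d,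
    alphaZ m i (d - d') • Finsupp.mapRange.linearMap (A j (d - d')) (h d')

lemma psi_matAct (i j : Fin l) (h : TodaV l R) :
    todaVPderiv m i (todaVMatAct (A j) h)
      = todaVMatAct (A j) (todaVPderiv m i h) + gam m A i j h := by
  funext d
  show todaVPderiv m i (todaVMatAct (A j) h) d
    = todaVMatAct (A j) (todaVPderiv m i h) d + gam m A i j h d
  rw [todaVPderiv_apply']
  unfold todaVMatAct gam
  rw [map_sum (dLin i), tzsmul_sum, tsum_add_distrib, tsum_add_distrib]
  apply Finset.sum_congr rfl
  intro d' hd'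
  have hle : d' ≤ d := Finset.mem_Iic.mp hd'
  rw [dLin_mapRange, todaVPderiv_apply' m i h d',
    tmap_add (Finsupp.mapRange.linearMap (A j (d - d'))),
    tmap_zsmul (Finsupp.mapRange.linearMap (A j (d - d'))),
    alphaZ_tsub m i hle, tsubZ_smul (alphaZ m i d) (alphaZ m i d')]
  abel

lemma gam_symm (hb : ∀ (i j : Fin l) (d : Fin (l + 1) → ℕ),
      ((d (Fin.castSucc i) : ℤ) - (m i : ℤ) * (d (Fin.last l) : ℤ)) • A j d
        = ((d (Fin.castSucc j) : ℤ) - (m j : ℤ) * (d (Fin.last l) : ℤ)) • A i d)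
    (i j : Fin l) (h : TodaV l R) : gam m A i j h = gam m A j i h := by
  funext d
  unfold gam
  apply Finset.sum_congr rfl
  intro d' _
  rw [← mapRange_zsmul, ← mapRange_zsmul]
  have hb' : alphaZ m i (d - d') • A j (d - d') = alphaZ m j (d - d') • A i (d - d') :=
    hb i j (d - d')
  rw [hb']

lemma matAct_sub (B : (Fin (l + 1) → ℕ) → ((ℕ →₀ R) →ₗ[R] (ℕ →₀ R))) (h₁ h₂ : TodaV l R) :
    todaVMatAct B (h₁ - h₂) = todaVMatAct B h₁ - todaVMatAct B h₂ := by
  funext d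
  show todaVMatAct B (h₁ - h₂) d = todaVMatAct B h₁ d - todaVMatAct B h₂ d
  unfold todaVMatAct
  rw [tsum_sub_distrib]
  apply Finset.sum_congr rfl
  intro d' _
  exact tmap_sub (Finsupp.mapRange.linearMap (B (d - d'))) (h₁ d') (h₂ d')

lemma pderiv_sub (i : Fin l) (h₁ h₂ : TodaV l R) :
    todaVPderiv m i (h₁ - h₂) = todaVPderiv m i h₁ - todaVPderiv m i h₂ := by
  funext d
  show todaVPderiv m i (h₁ - h₂) d = todaVPderiv m i h₁ d - todaVPderiv m i h₂ d
  rw [todaVPderiv_apply', todaVPderiv_apply', todaVPderiv_apply']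
  show dLin i (h₁ d - h₂ d) + alphaZ m i d • (h₁ d - h₂ d) = _
  rw [tmap_sub (dLin i), tsmulZ_sub]
  abel

/-- zero curvature of the connection -/
lemma curvature
    (hab : ∀ (i j : Fin l) (g : TodaV l R),
      todaVMatAct (A i) (todaVMatAct (A j) g) = todaVMatAct (A j) (todaVMatAct (A i) g))
    (hb : ∀ (i j : Fin l) (d : Fin (l + 1) → ℕ),
      ((d (Fin.castSucc i) : ℤ) - (m i : ℤ) * (d (Fin.last l) : ℤ)) • A j d
        = ((d (Fin.castSucc j) : ℤ) - (m j : ℤ) * (d (Fin.last l) : ℤ)) • A i d)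
    (i j : Fin l) (h : TodaV l R) :
    eOp m A i (eOp m A j h) = eOp m A j (eOp m A i h) := by
  unfold eOp
  rw [pderiv_sub m i, matAct_sub, pderiv_sub m j, matAct_sub]
  rw [psi_matAct m A i j h, psi_matAct m A j i h]
  rw [psi_psi m i j h]
  rw [hab i j h]
  rw [gam_symm m A hb i j h]
  funext d
  simp only [Pi.add_apply, Pi.sub_apply]
  abel

end Curvature
end Toda

namespace Toda
variable {l : ℕ} {R : Type*} [CommRing R] [Algebra ℝ R]

section Main

variable (m : Fin l → ℕ) (A : Fin l → (Fin (l + 1) → ℕ) → ((ℕ →₀ R) →ₗ[R] (ℕ →₀ R)))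
  (c : (Fin (l + 1) → ℕ) → (ℕ →₀ R))

lemma tzero_smul (x : TodaPoly l R) : (0 : ℤ) • x = 0 := zero_smul ℤ x

open Classical in
/-- the defining property of the solution at coefficient `d`, given the lower-order data -/
noncomputable def solPred (d : Fin (l+1) → ℕ) (prev : TodaV l R) (p : TodaPoly l R) : Prop :=
  if ∀ i, alphaZ m i d = 0 then
    (∀ i, todaPolyPderiv i p = Finsupp.mapRange.linearMap (A i 0) p + bvecM (A i) prev d)
      ∧ p 0 = c d
  else
    ∃ i, alphaZ m i d ≠ 0 ∧ todaPolyPderiv i p + alphaZ m i d • p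
      = Finsupp.mapRange.linearMap (A i 0) p + bvecM (A i) prev d

noncomputable def solStep (d : Fin (l+1) → ℕ) (prev : TodaV l R) : TodaPoly l R :=
  Classical.epsilon (solPred m A c d prev)

lemma solPred_congr (d : Fin (l+1) → ℕ) {prev prev' : TodaV l R}
    (hag : ∀ d' ∈ (Finset.Iic d).erase d, prev d' = prev' d') :
    solPred m A c d prev = solPred m A c d prev' := by
  have h : ∀ i, bvecM (A i) prev d = bvecM (A i) prev' d :=
    fun i => bvecM_congr (A i) d hag
  funext p
  unfold solPred
  simp only [h]

noncomputable def sol (d : Fin (l+1) → ℕ) : TodaPoly l R :=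
  solStep m A c d (fun d' => if h : (∑ x, d' x) < ∑ x, d x then sol d' else 0)
termination_by ∑ x, d x

lemma sol_eq (d : Fin (l+1) → ℕ) : sol m A c d = solStep m A c d (sol m A c) := by
  rw [sol]
  unfold solStep
  exact congrArg Classical.epsilon
    (solPred_congr m A c d (fun d' hd' => dif_pos (sum_lt_of_mem_erase hd')))

lemma matAct_zero_coeff (B : (Fin (l + 1) → ℕ) → ((ℕ →₀ R) →ₗ[R] (ℕ →₀ R)))
    (h : TodaV l R) :
    todaVMatAct B h 0 = Finsupp.mapRange.linearMap (B 0) (h 0) := by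
  have hIic : Finset.Iic (0 : Fin (l+1) → ℕ) = {0} := by
    ext e
    simp only [Finset.mem_Iic, Finset.mem_singleton]
    constructor
    · intro he; funext x; exact Nat.le_zero.mp (he x)
    · intro he; subst he; exact le_rfl
  show (∑ d' ∈ Finset.Iic (0 : Fin (l+1) → ℕ),
    Finsupp.mapRange.linearMap (B (0 - d')) (h d')) = _
  rw [hIic, Finset.sum_singleton, dsub_self]

lemma hBcomm_of_hab
    (hab : ∀ (i j : Fin l) (g : TodaV l R),
      todaVMatAct (A i) (todaVMatAct (A j) g) = todaVMatAct (A j) (todaVMatAct (A i) g)) :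
    ∀ (i j : Fin l) (x : ℕ →₀ R), A i 0 (A j 0 x) = A j 0 (A i 0 x) := by
  intro i j x
  classical
  set g0 : TodaV l R := fun d => if d = 0 then Finsupp.single (0 : Fin l →₀ ℕ) x else 0 with hg0
  have h := congrFun (hab i j g0) 0
  rw [matAct_zero_coeff, matAct_zero_coeff, matAct_zero_coeff, matAct_zero_coeff] at h
  have hg00 : g0 0 = Finsupp.single (0 : Fin l →₀ ℕ) x := if_pos rfl
  rw [hg00] at h
  have h2 := congrArg (fun p : TodaPoly l R => p 0) h
  simp only [Finsupp.mapRange.linearMap_apply, Finsupp.mapRange_apply,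
    Finsupp.single_eq_same] at h2
  exact h2

lemma main_key
    (hab : ∀ (i j : Fin l) (g : TodaV l R),
      todaVMatAct (A i) (todaVMatAct (A j) g) = todaVMatAct (A j) (todaVMatAct (A i) g))
    (hb : ∀ (i j : Fin l) (d : Fin (l + 1) → ℕ),
      ((d (Fin.castSucc i) : ℤ) - (m i : ℤ) * (d (Fin.last l) : ℤ)) • A j d
        = ((d (Fin.castSucc j) : ℤ) - (m j : ℤ) * (d (Fin.last l) : ℤ)) • A i d)
    (hupper : ∀ (i : Fin l) (k n : ℕ), k ≤ n →
      (A i 0 (Finsupp.single k 1) : ℕ →₀ R) n = 0) :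
    ∀ (N : ℕ) (d : Fin (l+1) → ℕ), (∑ x, d x) < N →
      (solPred m A c d (sol m A c) (sol m A c d) ∧ ∀ i, eOp m A i (sol m A c) d = 0) := by
  intro N
  induction N with
  | zero => intro d hd; omega
  | succ N ih =>
  intro d hd
  set g : TodaV l R := sol m A c with hgdef
  have ihall : ∀ d' ∈ (Finset.Iic d).erase d, ∀ i, eOp m A i g d' = 0 := by
    intro d' hd' i
    have hlt : (∑ x, d' x) < N := by
      have := sum_lt_of_mem_erase hd'
      omega
    exact (ih d' hlt).2 i
  -- existence of a good value at d
  have hex : ∃ p, solPred m A c d g p := by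
    by_cases hray : ∀ i, alphaZ m i d = 0
    · -- on the ray: use the Poincaré construction
      classical
      set h : TodaV l R := Function.update g d 0 with hh
      have hupd : ∀ d'', d'' ≠ d → h d'' = g d'' :=
        fun d'' hne => Function.update_of_ne hne 0 g
      have heq_er : ∀ d' ∈ (Finset.Iic d).erase d, ∀ i', eOp m A i' h d' = 0 := by
        intro d' hd' i'
        have hsum' := sum_lt_of_mem_erase hd'
        have hagg : ∀ d'' ∈ Finset.Iic d', h d'' = g d'' := by
          intro d'' hd''
          apply hupd
          intro hcontra
          subst hcontra
          have hle : d'' ≤ d' := Finset.mem_Iic.mp hd''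
          have : (∑ x, d'' x) ≤ ∑ x, d' x :=
            Finset.sum_le_sum (fun x _ => hle x)
          omega
        rw [eOp_congr m A i' d' hagg]
        exact ihall d' hd' i'
      have hEhd : ∀ jj, eOp m A jj h d = -(bvecM (A jj) g d) := by
        intro jj
        rw [eOp_apply, matAct_split]
        rw [show h d = 0 from Function.update_self d 0 g]
        rw [tpd_zero, smul_zero]
        rw [show Finsupp.mapRange.linearMap (A jj 0) (0 : TodaPoly l R) = 0 from map_zero _]
        rw [bvecM_congr (A jj) d (fun d' hd' => hupd d' (Finset.ne_of_mem_erase hd'))]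
        abel
      have hbv0 : ∀ (ii jj : Fin l), bvecM (A ii) (eOp m A jj h) d = 0 :=
        fun ii jj => Finset.sum_eq_zero (fun d' hd' => by
          rw [heq_er d' hd' jj]; exact map_zero _)
      have hform : ∀ (ii jj : Fin l), eOp m A ii (eOp m A jj h) d
          = Finsupp.mapRange.linearMap (A ii 0) (bvecM (A jj) g d)
            - todaPolyPderiv ii (bvecM (A jj) g d) := by
        intro ii jj
        rw [eOp_apply, matAct_split, hbv0 ii jj, hEhd jj, hray ii, tzero_smul]
        have hneg1 : todaPolyPderiv ii (-(bvecM (A jj) g d))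
            = -(todaPolyPderiv ii (bvecM (A jj) g d)) := by
          rw [← dLin_apply, ← dLin_apply]
          exact tmap_neg (dLin ii) (bvecM (A jj) g d)
        have hneg2 : Finsupp.mapRange.linearMap (A ii 0) (-(bvecM (A jj) g d))
            = -(Finsupp.mapRange.linearMap (A ii 0) (bvecM (A jj) g d)) :=
          tmap_neg (Finsupp.mapRange.linearMap (A ii 0)) (bvecM (A jj) g d)
        rw [hneg1, hneg2]
        abel
      have hcompat : ∀ i' j',
          todaPolyPderiv j' (bvecM (A i') g d)
            + Finsupp.mapRange.linearMap (A i' 0) (bvecM (A j') g d)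
          = todaPolyPderiv i' (bvecM (A j') g d)
            + Finsupp.mapRange.linearMap (A j' 0) (bvecM (A i') g d) := by
        intro i' j'
        have hcd := congrFun (curvature m A hab hb i' j' h) d
        rw [hform i' j', hform j' i'] at hcd
        calc todaPolyPderiv j' (bvecM (A i') g d)
              + Finsupp.mapRange.linearMap (A i' 0) (bvecM (A j') g d)
            = todaPolyPderiv j' (bvecM (A i') g d)
              + (Finsupp.mapRange.linearMap (A i' 0) (bvecM (A j') g d)
                 - todaPolyPderiv i' (bvecM (A j') g d))
              + todaPolyPderiv i' (bvecM (A j') g d) := by abel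
          _ = todaPolyPderiv j' (bvecM (A i') g d)
              + (Finsupp.mapRange.linearMap (A j' 0) (bvecM (A i') g d)
                 - todaPolyPderiv j' (bvecM (A i') g d))
              + todaPolyPderiv i' (bvecM (A j') g d) := by rw [hcd]
          _ = todaPolyPderiv i' (bvecM (A j') g d)
              + Finsupp.mapRange.linearMap (A j' 0) (bvecM (A i') g d) := by abel
      obtain ⟨p, hp1, hp2⟩ := poincare (fun i' => A i' 0) (fun i' => bvecM (A i') g d)
        (c d) (hBcomm_of_hab A hab) (fun i' => hupper i') hcompat
      refine ⟨p, ?_⟩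
      unfold solPred
      rw [if_pos hray]
      exact ⟨hp1, hp2⟩
    · -- off the ray
      have hray' := hray
      push_neg at hray'
      obtain ⟨i₀, hi₀⟩ := hray'
      obtain ⟨p, hp⟩ := lop_surj i₀ (A i₀ 0) (alphaZ m i₀ d) hi₀ (hupper i₀)
        (bvecM (A i₀) g d)
      refine ⟨p, ?_⟩
      unfold solPred
      rw [if_neg hray]
      refine ⟨i₀, hi₀, ?_⟩
      rw [← hp]
      unfold lop
      abel
  have hgd : g d = Classical.epsilon (solPred m A c d g) := sol_eq m A c d
  have hspec : solPred m A c d g (g d) := by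
    rw [hgd]
    exact Classical.epsilon_spec hex
  refine ⟨hspec, ?_⟩
  by_cases hray : ∀ i, alphaZ m i d = 0
  · -- on ray: all equations hold directly
    unfold solPred at hspec
    rw [if_pos hray] at hspec
    intro i
    rw [eOp_apply, matAct_split, hspec.1 i, hray i, tzero_smul, add_zero]
    exact tsub_self _
  · unfold solPred at hspec
    rw [if_neg hray] at hspec
    obtain ⟨i₀, hα, heq⟩ := hspec
    have herr0 : eOp m A i₀ g d = 0 := by
      rw [eOp_apply, matAct_split]
      exact sub_eq_zero_of_eq heq
    intro j
    have hcurv := congrFun (curvature m A hab hb i₀ j g) d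
    have hR : eOp m A j (eOp m A i₀ g) d = 0 := by
      rw [eOp_apply, matAct_split]
      have h2 : bvecM (A j) (eOp m A i₀ g) d = 0 :=
        Finset.sum_eq_zero (fun d' hd' => by rw [ihall d' hd' i₀]; exact map_zero _)
      rw [herr0, h2, tpd_zero, smul_zero]
      rw [show Finsupp.mapRange.linearMap (A j 0) (0 : TodaPoly l R) = 0 from map_zero _]
      abel
    have hL : eOp m A i₀ (eOp m A j g) d
        = lop i₀ (A i₀ 0) (alphaZ m i₀ d) (eOp m A j g d) := by
      rw [eOp_apply, matAct_split]
      have h2 : bvecM (A i₀) (eOp m A j g) d = 0 :=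
        Finset.sum_eq_zero (fun d' hd' => by rw [ihall d' hd' j]; exact map_zero _)
      rw [h2, add_zero]
      unfold lop
      abel
    have hz : lop i₀ (A i₀ 0) (alphaZ m i₀ d) (eOp m A j g d) = 0 := by
      rw [← hL, hcurv]
      exact hR
    exact lop_inj i₀ (A i₀ 0) (alphaZ m i₀ d) hα (hupper i₀) hz

end Main
end Toda

theorem stmt_3 (l : ℕ) (hl : 1 ≤ l) (m : Fin l → ℕ) (hm : ∀ i, 0 < m i)
    (R : Type*) [CommRing R] [Algebra ℝ R]
    (A : Fin l → (Fin (l + 1) → ℕ) → ((ℕ →₀ R) →ₗ[R] (ℕ →₀ R)))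
    (hfin : ∀ (i : Fin l) (k : ℕ),
      {d : Fin (l + 1) → ℕ | A i d (Finsupp.single k 1) ≠ 0}.Finite)
    (hab : ∀ (i j : Fin l) (g : TodaV l R),
      todaVMatAct (A i) (todaVMatAct (A j) g) = todaVMatAct (A j) (todaVMatAct (A i) g))
    (hb : ∀ (i j : Fin l) (d : Fin (l + 1) → ℕ),
      ((d (Fin.castSucc i) : ℤ) - (m i : ℤ) * (d (Fin.last l) : ℤ)) • A j d
        = ((d (Fin.castSucc j) : ℤ) - (m j : ℤ) * (d (Fin.last l) : ℤ)) • A i d)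
    (hupper : ∀ (i : Fin l) (k n : ℕ), k ≤ n →
      (A i 0 (Finsupp.single k 1) : ℕ →₀ R) n = 0)
    (hlower : ∀ (i : Fin l) (d : Fin (l + 1) → ℕ), d ≠ 0 → ∀ k n : ℕ, n ≤ k →
      (A i d (Finsupp.single k 1) : ℕ →₀ R) n = 0)
    (hvan : ∀ (i : Fin l) (d : Fin (l + 1) → ℕ), d ≠ 0 →
      (d (Fin.castSucc i) : ℤ) - (m i : ℤ) * (d (Fin.last l) : ℤ) = 0 → A i d = 0)
    (c : (Fin (l + 1) → ℕ) → (ℕ →₀ R)) :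
    ∃ g : TodaV l R,
      (∀ i : Fin l, todaVPderiv m i g = todaVMatAct (A i) g) ∧
      (∀ d : Fin (l + 1) → ℕ,
        (∀ i : Fin l, d (Fin.castSucc i) = m i * d (Fin.last l)) →
        (g d) 0 = c d) := by
  classical
  have key := Toda.main_key m A c hab hb hupper
  have keyd : ∀ d, Toda.solPred m A c d (Toda.sol m A c) (Toda.sol m A c d)
      ∧ ∀ i, Toda.eOp m A i (Toda.sol m A c) d = 0 :=
    fun d => key ((∑ x, d x) + 1) d (Nat.lt_succ_self _)
  refine ⟨Toda.sol m A c, ?_, ?_⟩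
  · intro i
    funext d
    have h0 := (keyd d).2 i
    have h1 : todaVPderiv m i (Toda.sol m A c) d
        - todaVMatAct (A i) (Toda.sol m A c) d = 0 := h0
    exact sub_eq_zero.mp h1
  · intro d hd
    have hray : ∀ i, Toda.alphaZ m i d = 0 := by
      intro i
      unfold Toda.alphaZ
      rw [hd i]
      push_cast
      ring
    have hsp := (keyd d).1
    unfold Toda.solPred at hsp
    rw [if_pos hray] at hsp
    exact hsp.2
end

section
/- (Version of Kim's Lemma for the periodic Toda lattice.) Assume the coroot setup below and let h be a nonzero real number. Let g = (g_d)_{d∈ℕ^{l+1}} ∈ W satisfy g_0 = 0 and H(e^{t_j}, h∂_i, h) g = 0, i.e., for every d ∈ ℕ^{l+1}: Σ_{i,j=1}^l ⟨α_i^∨, α_j^∨⟩ h² D_i^{(d)} D_j^{(d)} g_d = Σ_{j=1}^{l+1} ⟨α_j^∨, α_j^∨⟩ g_{d−e_j}. Then g_d = 0 for every d with |d| ≤ m_1 + ⋯ + m_l. -/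
open MvPolynomial

lemma kim_pderiv_totalDegree_le {l : ℕ} (i : Fin l) (p : MvPolynomial (Fin l) ℝ) :
    (pderiv i p).totalDegree ≤ p.totalDegree - 1 := by
  conv_lhs => rw [p.as_sum]
  rw [map_sum]
  refine totalDegree_finsetSum_le fun s hs => ?_
  rw [pderiv_monomial]
  rcases Nat.eq_zero_or_pos (s i) with h0 | h1
  · simp [h0]
  · refine (totalDegree_monomial_le _ _).trans ?_
    have hle : Finsupp.single i 1 ≤ s := by
      rwa [Finsupp.single_le_iff]
    have h2 : (s - Finsupp.single i 1) + Finsupp.single i 1 = s := tsub_add_cancel_of_le hle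
    have hsum : (s - Finsupp.single i 1).sum (fun _ e => e) + 1 = s.sum (fun _ e => e) := by
      conv_rhs => rw [← h2]
      rw [Finsupp.sum_add_index' (fun _ => rfl) (fun _ _ _ => rfl),
        Finsupp.sum_single_index rfl]
    have h3 : s.sum (fun _ e => e) ≤ p.totalDegree := le_totalDegree hs
    simp only [Function.id_def]
    omega

lemma kim_inj {l : ℕ} (A : Fin l → Fin l → ℝ) (c : Fin l → ℝ)
    (hK : (∑ i, ∑ j, A i j * (c i * c j)) ≠ 0)
    (p : MvPolynomial (Fin l) ℝ)
    (heq : ∑ i, ∑ j, A i j •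
      (pderiv i (pderiv j p + c j • p) + c i • (pderiv j p + c j • p)) = 0) :
    p = 0 := by
  classical
  set K := ∑ i, ∑ j, A i j * (c i * c j) with hKdef
  set S := ∑ i, ∑ j, A i j • (pderiv i (pderiv j p)
      + c j • pderiv i p + c i • pderiv j p) with hS
  have hsplit : S + K • p = 0 := by
    rw [← heq, hKdef, Finset.sum_smul, ← Finset.sum_add_distrib]
    refine Finset.sum_congr rfl fun i _ => ?_
    rw [Finset.sum_smul, ← Finset.sum_add_distrib]
    refine Finset.sum_congr rfl fun j _ => ?_
    simp only [map_add, Derivation.map_smul, smul_add, smul_smul]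
    module
  by_contra hp
  have hKp : K • p = -S := by
    rw [eq_neg_iff_add_eq_zero, add_comm]; exact hsplit
  rcases Nat.eq_zero_or_pos p.totalDegree with hD | hD
  · -- p is a nonzero constant
    have hpz : ∀ i : Fin l, pderiv i p = 0 := by
      intro i
      conv_lhs => rw [p.as_sum]
      rw [map_sum]
      refine Finset.sum_eq_zero fun s hs => ?_
      have h0 := (totalDegree_eq_zero_iff _ p).mp hD s hs i
      rw [pderiv_monomial, h0]
      simp
    have hS0 : S = 0 := by
      simp [hS, hpz]
    rw [hS0, zero_add] at hsplit
    apply hp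
    have hz : K⁻¹ • (K • p) = 0 := by rw [hsplit, smul_zero]
    rwa [smul_smul, inv_mul_cancel₀ hK, one_smul] at hz
  · have hterm : ∀ i j : Fin l,
        (A i j • (pderiv i (pderiv j p) + c j • pderiv i p + c i • pderiv j p)).totalDegree
          ≤ p.totalDegree - 1 := by
      intro i j
      refine (totalDegree_smul_le _ _).trans ?_
      refine (totalDegree_add _ _).trans (max_le ((totalDegree_add _ _).trans (max_le ?_ ?_)) ?_)
      · have h1 := kim_pderiv_totalDegree_le i (pderiv j p)
        have h2 := kim_pderiv_totalDegree_le j p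
        omega
      · exact (totalDegree_smul_le _ _).trans (kim_pderiv_totalDegree_le i p)
      · exact (totalDegree_smul_le _ _).trans (kim_pderiv_totalDegree_le j p)
    have hSdeg : S.totalDegree ≤ p.totalDegree - 1 := by
      rw [hS]
      exact totalDegree_finsetSum_le fun i _ =>
        totalDegree_finsetSum_le fun j _ => hterm i j
    have hpd : p.totalDegree ≤ S.totalDegree := by
      have hpeq : p = (-K⁻¹) • S := by
        have : K⁻¹ • (K • p) = K⁻¹ • (-S) := by rw [hKp]
        rw [smul_smul, inv_mul_cancel₀ hK, one_smul] at this
        rw [this, smul_neg, neg_smul]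
      calc p.totalDegree = ((-K⁻¹) • S).totalDegree := by rw [← hpeq]
        _ ≤ S.totalDegree := totalDegree_smul_le _ _
    omega
/-!
STATEMENT 4 (the paper's version of Kim's Lemma, Lemma 6.5).

Setup.  `E` is a real inner product space, `α i` (for `i : Fin l`) are the linearly
independent simple coroots `α_i^∨`, `m i` are positive integers, and
`α_{l+1}^∨ = −(m_1 α_1^∨ + ⋯ + m_l α_l^∨)`.  The space
`W = ℝ[{t_i}][[{e^{t_j}}]]` is modeled by families
`g : (Fin (l+1) → ℕ) → MvPolynomial (Fin l) ℝ`, the coefficient of `e^{t·d}`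
being the polynomial `g d`.  The indices `1,…,l` are `Fin.castSucc i` for
`i : Fin l`, and the index `l+1` is `Fin.last l`.
-/

/-- The extended coroot family: `α_1^∨, …, α_l^∨` together with
`α_{l+1}^∨ = −(m_1 α_1^∨ + ⋯ + m_l α_l^∨)`. -/
noncomputable def corootExt {E : Type*} [NormedAddCommGroup E] [InnerProductSpace ℝ E]
    {l : ℕ} (α : Fin l → E) (m : Fin l → ℕ) : Fin (l + 1) → E :=
  Fin.snoc α (-(∑ i, (m i : ℝ) • α i))

/-- The twisted derivative `D_i^{(d)}` acting on `ℝ[t_1,…,t_l]`: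
`D_i^{(d)} p = ∂p/∂t_i + (d_i − m_i d_{l+1}) p`. -/
noncomputable def kimD {l : ℕ} (m : Fin l → ℕ) (d : Fin (l + 1) → ℕ) (i : Fin l)
    (p : MvPolynomial (Fin l) ℝ) : MvPolynomial (Fin l) ℝ :=
  MvPolynomial.pderiv i p +
    ((d (Fin.castSucc i) : ℝ) - (m i : ℝ) * (d (Fin.last l) : ℝ)) • p

/-- `g_{d − e_j}`, with the convention that it is `0` when `d_j = 0`. -/
noncomputable def kimShift {l : ℕ}
    (g : (Fin (l + 1) → ℕ) → MvPolynomial (Fin l) ℝ)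
    (d : Fin (l + 1) → ℕ) (j : Fin (l + 1)) : MvPolynomial (Fin l) ℝ :=
  if d j = 0 then 0 else g (Function.update d j (d j - 1))

theorem stmt_4 {E : Type*} [NormedAddCommGroup E] [InnerProductSpace ℝ E]
    (l : ℕ) (hl : 1 ≤ l)
    (α : Fin l → E) (hα : LinearIndependent ℝ α)
    (m : Fin l → ℕ) (hm : ∀ i, 0 < m i)
    (h : ℝ) (hh : h ≠ 0)
    (g : (Fin (l + 1) → ℕ) → MvPolynomial (Fin l) ℝ)
    -- `g_0 = 0`
    (hg0 : g 0 = 0)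
    -- `H(e^{t_j}, h∂_i, h) g = 0`, coefficientwise in `e^{t·d}`:
    -- `Σ_{i,j=1}^l ⟨α_i^∨, α_j^∨⟩ h² D_i^{(d)} D_j^{(d)} g_d
    --    = Σ_{j=1}^{l+1} ⟨α_j^∨, α_j^∨⟩ g_{d−e_j}`
    (hH : ∀ d : Fin (l + 1) → ℕ,
      ∑ i : Fin l, ∑ j : Fin l,
        ((inner ℝ (α i) (α j) : ℝ) * h ^ 2) • kimD m d i (kimD m d j (g d))
      = ∑ j : Fin (l + 1),
          (inner ℝ (corootExt α m j) (corootExt α m j) : ℝ) • kimShift g d j) :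
    -- then `g_d = 0` for every `d` with `|d| ≤ m_1 + ⋯ + m_l`
    ∀ d : Fin (l + 1) → ℕ, (∑ j, d j) ≤ ∑ i, m i → g d = 0 := by
  suffices H : ∀ n : ℕ, ∀ d : Fin (l + 1) → ℕ, (∑ j, d j) = n →
      (∑ j, d j) ≤ ∑ i, m i → g d = 0 by
    exact fun d hd => H _ d rfl hd
  intro n
  induction n using Nat.strong_induction_on with
  | _ n IH =>
    intro d hdn hdle
    by_cases hd0 : d = 0
    · rw [hd0]; exact hg0
    -- All shifted terms vanish by the induction hypothesis.
    have hRHS : ∀ j : Fin (l + 1), kimShift g d j = 0 := by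
      intro j
      unfold kimShift
      split
      · rfl
      · next hj =>
        set d' := Function.update d j (d j - 1) with hd'
        have hsum' : (∑ k, d' k) + 1 = ∑ j, d j := by
          rw [hd', Finset.sum_update_of_mem (Finset.mem_univ j),
            Finset.sdiff_singleton_eq_erase]
          rw [← Finset.add_sum_erase _ d (Finset.mem_univ j)]
          omega
        exact IH (∑ k, d' k) (by omega) d' rfl (by omega)
    have heq0 : ∑ i : Fin l, ∑ j : Fin l,
        ((inner ℝ (α i) (α j) : ℝ) * h ^ 2) • kimD m d i (kimD m d j (g d)) = 0 := by
      rw [hH d]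
      simp [hRHS]
    -- Set up the coefficients.
    set c : Fin l → ℝ :=
      fun i => (d (Fin.castSucc i) : ℝ) - (m i : ℝ) * (d (Fin.last l) : ℝ) with hc
    -- The coefficients cannot all vanish.
    have hcne : ¬ ∀ i, c i = 0 := by
      intro hall
      have hnat : ∀ i : Fin l, d (Fin.castSucc i) = m i * d (Fin.last l) := by
        intro i
        have h1 : ((d (Fin.castSucc i) : ℝ)) = (m i : ℝ) * (d (Fin.last l) : ℝ) := by
          have h0 := hall i
          rw [hc] at h0
          simp only at h0
          linarith
        exact_mod_cast h1
      rcases Nat.eq_zero_or_pos (d (Fin.last l)) with h0 | h1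
      · apply hd0
        funext j
        refine Fin.lastCases ?_ (fun i => ?_) j
        · exact h0
        · have := hnat i
          rw [h0, mul_zero] at this
          exact this
      · have hsum : ∑ j, d j = (∑ i, m i) * d (Fin.last l) + d (Fin.last l) := by
          rw [Fin.sum_univ_castSucc, Finset.sum_mul]
          congr 1
          exact Finset.sum_congr rfl fun i _ => hnat i
        have hM1 : 1 ≤ ∑ i, m i := by
          have h2 : 0 < m ⟨0, hl⟩ := hm _
          calc 1 ≤ m ⟨0, hl⟩ := h2
            _ ≤ ∑ i, m i := Finset.single_le_sum (fun i _ => Nat.zero_le _) (Finset.mem_univ _)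
        have : (∑ i, m i) ≤ (∑ i, m i) * d (Fin.last l) := Nat.le_mul_of_pos_right _ h1
        omega
    -- The vector Σ c i • α i is nonzero.
    have hvne : (∑ i, c i • α i) ≠ 0 := by
      intro hv0
      exact hcne (Fintype.linearIndependent_iff.mp hα c hv0)
    -- The constant K is nonzero.
    have hKpos : 0 < ∑ i, ∑ j, (((inner ℝ (α i) (α j) : ℝ)) * h ^ 2) * (c i * c j) := by
      have hvv : (0 : ℝ) < inner ℝ (∑ i, c i • α i) (∑ j, c j • α j) := by
        have hnn : (0 : ℝ) ≤ inner ℝ (∑ i, c i • α i) (∑ i, c i • α i) :=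
          real_inner_self_nonneg
        rcases hnn.lt_or_eq with hlt | heq0'
        · exact hlt
        · exact absurd (inner_self_eq_zero.mp heq0'.symm) hvne
      have hexp : (inner ℝ (∑ i, c i • α i) (∑ j, c j • α j) : ℝ)
          = ∑ i, ∑ j, (inner ℝ (α i) (α j) : ℝ) * (c i * c j) := by
        rw [sum_inner]
        refine Finset.sum_congr rfl fun i _ => ?_
        rw [inner_sum]
        refine Finset.sum_congr rfl fun j _ => ?_
        rw [real_inner_smul_left, real_inner_smul_right]
        ring
      have hh2 : (0 : ℝ) < h ^ 2 := by positivity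
      have : ∑ i, ∑ j, (((inner ℝ (α i) (α j) : ℝ)) * h ^ 2) * (c i * c j)
          = h ^ 2 * ∑ i, ∑ j, (inner ℝ (α i) (α j) : ℝ) * (c i * c j) := by
        rw [Finset.mul_sum]
        refine Finset.sum_congr rfl fun i _ => ?_
        rw [Finset.mul_sum]
        refine Finset.sum_congr rfl fun j _ => ?_
        ring
      rw [this, ← hexp]
      positivity
    -- Conclude by the injectivity lemma.
    refine kim_inj (fun i j => (inner ℝ (α i) (α j) : ℝ) * h ^ 2) c (ne_of_gt hKpos) (g d) ?_
    rw [← heq0]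
    refine Finset.sum_congr rfl fun i _ => Finset.sum_congr rfl fun j _ => ?_
    rw [kimD, kimD, hc]
end

section
/- Let l ≥ 1, let (a_{ij})_{1≤i,j≤l} be real numbers, and let c = (c_1,…,c_l) ∈ ℝ^l. If a nonzero polynomial p ∈ ℝ[t_1,…,t_l] satisfies Σ_{i,j=1}^l a_{ij} (∂/∂t_i + c_i)(∂/∂t_j + c_j) p = 0, then Σ_{i,j=1}^l a_{ij} c_i c_j = 0. -/
/-!
STATEMENT 8 (reduction step in the proof of Kim's Lemma, Lemma 6.5).

Here `∂/∂t_i + c_i` is the first-order differential operator on `ℝ[t_1,…,t_l]`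
sending `p` to `∂p/∂t_i + c_i p`; these operators are composed.  If a nonzero
polynomial `p` satisfies `Σ_{i,j} a_{ij} (∂/∂t_i + c_i)(∂/∂t_j + c_j) p = 0`,
then `Σ_{i,j} a_{ij} c_i c_j = 0`.
-/

open MvPolynomial Finsupp

lemma aux_sum_lt {l : ℕ} {s : Fin l →₀ ℕ} {i : Fin l} (hs : s i ≠ 0) :
    ((s - Finsupp.single i 1).sum fun _ e => e) < s.sum fun _ e => e := by
  have h : Finsupp.single i 1 ≤ s := by
    rw [Finsupp.single_le_iff]; omega
  have : (s - Finsupp.single i 1) + Finsupp.single i 1 = s := tsub_add_cancel_of_le h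
  calc ((s - Finsupp.single i 1).sum fun _ e => e)
      < ((s - Finsupp.single i 1).sum fun _ e => e) + 1 := Nat.lt_succ_self _
    _ = s.sum fun _ e => e := by
        conv_rhs => rw [← this]
        rw [Finsupp.sum_add_index (by simp) (by intros; rfl)]
        simp

lemma pderiv_as_sum {l : ℕ} (q : MvPolynomial (Fin l) ℝ) (i : Fin l) :
    pderiv i q = ∑ s ∈ q.support, monomial (s - Finsupp.single i 1) (coeff s q * s i) := by
  conv_lhs => rw [q.as_sum]
  rw [map_sum]
  exact Finset.sum_congr rfl fun s _ => pderiv_monomial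

lemma totalDegree_pderiv_le {l : ℕ} (q : MvPolynomial (Fin l) ℝ) (i : Fin l) :
    (pderiv i q).totalDegree ≤ q.totalDegree := by
  rw [pderiv_as_sum]
  apply totalDegree_finsetSum_le
  intro s hs
  refine (totalDegree_monomial_le _ _).trans ?_
  refine le_trans ?_ (le_totalDegree hs)
  by_cases h : s i = 0
  · have : s - Finsupp.single i 1 = s := by
      ext j
      rw [Finsupp.tsub_apply, Finsupp.single_apply]
      by_cases hj : i = j
      · subst hj; omega
      · simp [hj]
    rw [this]
    exact le_rfl
  · exact (aux_sum_lt h).le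

lemma coeff_pderiv_zero {l : ℕ} (q : MvPolynomial (Fin l) ℝ) (i : Fin l)
    {m : Fin l →₀ ℕ} (hm : q.totalDegree ≤ m.sum fun _ e => e) :
    coeff m (pderiv i q) = 0 := by
  rw [pderiv_as_sum, coeff_sum]
  apply Finset.sum_eq_zero
  intro s hs
  by_cases h : s i = 0
  · simp [h]
  · rw [coeff_monomial, if_neg]
    intro hsm
    have h1 : ((s - Finsupp.single i 1).sum fun _ e => e) < s.sum fun _ e => e := aux_sum_lt h
    have h2 : (s.sum fun _ e => e) ≤ q.totalDegree := le_totalDegree hs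
    rw [hsm] at h1
    omega

/-- The first-order differential operator `∂/∂t_i + c_i` on `ℝ[t_1,…,t_l]`. -/
noncomputable def firstOrderOp {l : ℕ} (c : Fin l → ℝ) (i : Fin l)
    (p : MvPolynomial (Fin l) ℝ) : MvPolynomial (Fin l) ℝ :=
  MvPolynomial.pderiv i p + c i • p

theorem stmt_8 (l : ℕ) (hl : 1 ≤ l)
    (a : Fin l → Fin l → ℝ) (c : Fin l → ℝ)
    (p : MvPolynomial (Fin l) ℝ) (hp : p ≠ 0)
    (heq : ∑ i : Fin l, ∑ j : Fin l,
      a i j • firstOrderOp c i (firstOrderOp c j p) = 0) :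
    ∑ i : Fin l, ∑ j : Fin l, a i j * c i * c j = 0 := by
  classical
  obtain ⟨m, hm, hms⟩ : ∃ m ∈ p.support, p.totalDegree = m.sum fun _ e => e :=
    Finset.exists_mem_eq_sup p.support (support_nonempty.mpr hp) _
  have hcm : coeff m p ≠ 0 := MvPolynomial.mem_support_iff.mp hm
  have hle : p.totalDegree ≤ m.sum fun _ e => e := hms.le
  have key : ∀ i j : Fin l,
      coeff m (firstOrderOp c i (firstOrderOp c j p)) = c i * c j * coeff m p := by
    intro i j
    unfold firstOrderOp
    rw [map_add, Derivation.map_smul]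
    simp only [coeff_add, coeff_smul, smul_eq_mul]
    rw [coeff_pderiv_zero _ _ ((totalDegree_pderiv_le p j).trans hle),
        coeff_pderiv_zero _ _ hle, coeff_pderiv_zero _ _ hle]
    ring
  have h0 := congrArg (coeff m) heq
  simp only [coeff_sum, coeff_smul, smul_eq_mul, key, coeff_zero] at h0
  have h1 : (∑ i : Fin l, ∑ j : Fin l, a i j * c i * c j) * coeff m p = 0 := by
    rw [Finset.sum_mul]
    simp_rw [Finset.sum_mul, mul_assoc]
    rw [← h0]
    simp_rw [mul_assoc]
  exact (mul_eq_zero.mp h1).resolve_right hcm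
end
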